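/- arXiv:1404.3309 — 7 statements merged into one kernel-verified Lean document; each statement's English description precedes it below -/
import Mathlib

section
/- Let K be a quantum channel on C^n with Kraus operators K_1,...,K_d and define F_min(K) = min over density matrices ρ of √(∑_i |Tr(ρ K_i)|²). If F_min(K) > 0, then F_min(K) = max over unit vectors v ∈ C^d of (1/2)λ_min(∑_i v_i K_i + (∑_i v_i K_i)†). -/
/-!
Write `a(ρ) = (Tr(ρ Kᵢ))ᵢ ∈ ℂᵈ`, so that `F_min` is the distance from `0` to the convex set
`C = a(density matrices)`. For `M = ∑ vᵢ Kᵢ`, the minimum of `⟨x, (M + Mᴴ) x⟩` over unit `x`, and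
hence of `Re Tr(ρ (M + Mᴴ))` over density matrices `ρ`, is `λ_min`; since `Re Tr(ρ (M + Mᴴ)) =
2 Re Tr(ρ M) = 2 Re ⟪v̄, a(ρ)⟫`, the quantity `½ λ_min` is the minimum of `Re ⟪v̄, ·⟫` on `C`.
The theorem is then minimum-norm duality: if `p ∈ C` is nearest to `0`, the projection inequality
`⟪p, q - p⟫ ≥ 0` on `C` shows that the direction `p / ‖p‖` achieves `min_C ⟪p / ‖p‖, ·⟫ = ‖p‖`,
while Cauchy–Schwarz at `q = p` bounds every other direction by `‖p‖`.
-/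

open Matrix
open scoped ComplexOrder

noncomputable section

theorem hermAdd {n : ℕ} (K : Matrix (Fin n) (Fin n) ℂ) : (K + Kᴴ).IsHermitian := by
  unfold Matrix.IsHermitian
  rw [conjTranspose_add, conjTranspose_conjTranspose, add_comm]

section MinimalNorm

variable {E : Type*} [NormedAddCommGroup E] [InnerProductSpace ℝ E] {C : Set E} {p : E}

theorem Convex.sq_norm_le_inner_of_forall_norm_le (hC : Convex ℝ C) (hp : p ∈ C)
    (hmin : ∀ q ∈ C, ‖p‖ ≤ ‖q‖) {q : E} (hq : q ∈ C) : ‖p‖ ^ 2 ≤ inner ℝ p q := by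
  have : Nonempty C := ⟨⟨p, hp⟩⟩
  have hproj : ‖0 - p‖ = ⨅ w : C, ‖0 - (w : E)‖ := by
    simp only [zero_sub, norm_neg]
    exact le_antisymm (le_ciInf fun w => hmin w w.2) <| ciInf_le (f := fun w : C => ‖(w : E)‖)
      ⟨0, Set.forall_mem_range.2 fun w => norm_nonneg _⟩ ⟨p, hp⟩
  have h := (norm_eq_iInf_iff_real_inner_le_zero hC hp).1 hproj q hq
  rw [zero_sub, inner_neg_left, inner_sub_right, real_inner_self_eq_norm_sq] at h
  linarith

theorem Convex.isGreatest_isLeast_inner_of_forall_norm_le (hC : Convex ℝ C) (hp : p ∈ C)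
    (hmin : ∀ q ∈ C, ‖p‖ ≤ ‖q‖) (hp0 : p ≠ 0) :
    IsGreatest {m | ∃ u : E, ‖u‖ = 1 ∧ IsLeast (inner ℝ u '' C) m} ‖p‖ := by
  have hpos : 0 < ‖p‖ := norm_pos_iff.2 hp0
  refine ⟨⟨‖p‖⁻¹ • p, norm_smul_inv_norm hp0, ⟨p, hp, ?_⟩, ?_⟩, ?_⟩
  · rw [real_inner_smul_left, real_inner_self_eq_norm_sq]
    field_simp
  · rintro _ ⟨q, hq, rfl⟩
    rw [real_inner_smul_left, le_inv_mul_iff₀ hpos, ← sq]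
    exact hC.sq_norm_le_inner_of_forall_norm_le hp hmin hq
  · rintro m ⟨u, hu, hm⟩
    calc m ≤ inner ℝ u p := hm.2 ⟨p, hp, rfl⟩
      _ ≤ ‖u‖ * ‖p‖ := real_inner_le_norm u p
      _ = ‖p‖ := by rw [hu, one_mul]

end MinimalNorm

namespace Matrix

variable {𝕜 n κ : Type*} [RCLike 𝕜] [Fintype n] [Fintype κ]

def densityMatrices (𝕜 n : Type*) [RCLike 𝕜] [Fintype n] : Set (Matrix n n 𝕜) :=
  {ρ | ρ.PosSemidef ∧ ρ.trace = 1}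

theorem convex_densityMatrices : Convex ℝ (densityMatrices 𝕜 n) := by
  rintro ρ ⟨hρ, hρ1⟩ σ ⟨hσ, hσ1⟩ a b ha hb hab
  refine ⟨(hρ.smul ha).add (hσ.smul hb), ?_⟩
  rw [trace_add, trace_smul, trace_smul, hρ1, hσ1, ← add_smul, hab, one_smul]

theorem vecMulVec_star_mem_densityMatrices {x : EuclideanSpace 𝕜 n} (hx : ‖x‖ = 1) :
    vecMulVec x.ofLp (star x.ofLp) ∈ densityMatrices 𝕜 n := by
  refine ⟨posSemidef_vecMulVec_self_star _, ?_⟩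
  rw [trace_vecMulVec, ← EuclideanSpace.inner_eq_star_dotProduct, inner_self_eq_norm_sq_to_K, hx]
  simp

open scoped MatrixOrder in
theorem PosSemidef.trace_mul_nonneg [DecidableEq n] {A B : Matrix n n 𝕜} (hA : A.PosSemidef)
    (hB : B.PosSemidef) : 0 ≤ (A * B).trace := by
  have hS : (CFC.sqrt B)ᴴ = CFC.sqrt B := (CFC.sqrt_nonneg B).isSelfAdjoint
  rw [← CFC.sqrt_mul_sqrt_self B hB.nonneg, ← Matrix.mul_assoc, trace_mul_comm, ← Matrix.mul_assoc]
  simpa only [hS] using (hA.mul_mul_conjTranspose_same (CFC.sqrt B)).trace_nonneg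

open scoped MatrixOrder in
theorem IsHermitian.iInf_eigenvalues_le_re_trace_mul [DecidableEq n] {H : Matrix n n 𝕜}
    (hH : H.IsHermitian) {ρ : Matrix n n 𝕜} (hρ : ρ ∈ densityMatrices 𝕜 n) :
    ⨅ j, hH.eigenvalues j ≤ RCLike.re (ρ * H).trace := by
  set c := ⨅ j, hH.eigenvalues j
  have hc : (H - algebraMap ℝ _ c).PosSemidef := by
    rw [← le_iff, algebraMap_le_iff_le_spectrum hH.isSelfAdjoint,
      hH.spectrum_real_eq_range_eigenvalues]
    rintro _ ⟨j, rfl⟩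
    exact ciInf_le (Finite.bddBelow_range _) j
  have h := hρ.1.trace_mul_nonneg hc
  rw [Algebra.algebraMap_eq_smul_one, Matrix.mul_sub, Matrix.mul_smul, Matrix.mul_one, trace_sub,
    trace_smul, hρ.2, sub_nonneg] at h
  simpa [RCLike.smul_re] using (RCLike.le_iff_re_im.1 h).1

theorem IsHermitian.eigenvalues_eq_re_trace_mul [DecidableEq n] {H : Matrix n n 𝕜}
    (hH : H.IsHermitian) (j : n) :
    hH.eigenvalues j = RCLike.re (vecMulVec (hH.eigenvectorBasis j).ofLp
      (star (hH.eigenvectorBasis j).ofLp) * H).trace := by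
  rw [hH.eigenvalues_eq j, vecMulVec_mul, trace_vecMulVec, dotProduct_mulVec, dotProduct_comm]

theorem IsHermitian.isLeast_iInf_eigenvalues [DecidableEq n] [Nonempty n] {H : Matrix n n 𝕜}
    (hH : H.IsHermitian) :
    IsLeast ((fun ρ => RCLike.re (ρ * H).trace) '' densityMatrices 𝕜 n)
      (⨅ j, hH.eigenvalues j) := by
  obtain ⟨j, hj⟩ := exists_eq_ciInf_of_finite (f := hH.eigenvalues)
  refine ⟨⟨_, vecMulVec_star_mem_densityMatrices (hH.eigenvectorBasis.orthonormal.1 j), ?_⟩, ?_⟩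
  · rw [← hj, hH.eigenvalues_eq_re_trace_mul]
  · rintro _ ⟨ρ, hρ, rfl⟩
    exact hH.iInf_eigenvalues_le_re_trace_mul hρ

theorem IsHermitian.re_trace_mul_add_conjTranspose {ρ : Matrix n n 𝕜} (hρ : ρ.IsHermitian)
    (M : Matrix n n 𝕜) : RCLike.re (ρ * (M + Mᴴ)).trace = 2 * RCLike.re (ρ * M).trace := by
  have : ρ * Mᴴ = (M * ρ)ᴴ := by rw [conjTranspose_mul, hρ.eq]
  rw [Matrix.mul_add, trace_add, this, trace_conjTranspose, trace_mul_comm M, map_add,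
    RCLike.star_def, RCLike.conj_re]
  ring

end Matrix

section KrausOperators

variable {n κ : Type*} [Fintype n] [Fintype κ]

def traceVector (K : κ → Matrix n n ℂ) : Matrix n n ℂ →ₗ[ℂ] EuclideanSpace ℂ κ where
  toFun ρ := WithLp.toLp 2 fun i => (ρ * K i).trace
  map_add' ρ σ := by ext i; simp [Matrix.add_mul]
  map_smul' c ρ := by ext i; simp

theorem norm_traceVector (K : κ → Matrix n n ℂ) (ρ : Matrix n n ℂ) :
    ‖traceVector K ρ‖ = √(∑ i, ‖(ρ * K i).trace‖ ^ 2) :=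
  EuclideanSpace.norm_eq _

theorem inner_toLp_star_traceVector (K : κ → Matrix n n ℂ) (v : κ → ℂ) (ρ : Matrix n n ℂ) :
    inner ℝ (WithLp.toLp 2 (star v)) (traceVector K ρ) = RCLike.re (ρ * ∑ i, v i • K i).trace := by
  simp [PiLp.inner_apply, traceVector, Complex.inner, Matrix.mul_sum, trace_sum, mul_comm]

theorem isLeast_inner_traceVector [DecidableEq n] [Nonempty n] (K : κ → Matrix n n ℂ)
    (v : κ → ℂ) (hH : (∑ i, v i • K i + (∑ i, v i • K i)ᴴ).IsHermitian) :
    IsLeast (inner ℝ (WithLp.toLp 2 (star v)) '' (traceVector K '' densityMatrices ℂ n))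
      (1 / 2 * ⨅ j, hH.eigenvalues j) := by
  have h := (monotone_mul_left_of_nonneg (by norm_num : (0 : ℝ) ≤ 1 / 2)).map_isLeast
    hH.isLeast_iInf_eigenvalues
  rw [Set.image_image] at h ⊢
  refine (Set.EqOn.image_eq fun ρ hρ => ?_) ▸ h
  rw [inner_toLp_star_traceVector, hρ.1.isHermitian.re_trace_mul_add_conjTranspose]
  ring

end KrausOperators

theorem Fmin_eq_cos_time_energy_cost_general {n d : ℕ} (hn : 0 < n)
    (K : Fin d → Matrix (Fin n) (Fin n) ℂ)
    (Fmin : ℝ)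
    (hF : IsLeast {x : ℝ | ∃ ρ : Matrix (Fin n) (Fin n) ℂ, ρ.PosSemidef ∧ ρ.trace = 1 ∧
        x = Real.sqrt (∑ i, ‖(ρ * K i).trace‖ ^ 2)} Fmin)
    (hFpos : 0 < Fmin) :
    IsGreatest {x : ℝ | ∃ v : Fin d → ℂ, ∑ i, ‖v i‖ ^ 2 = 1 ∧
        x = (1/2) * ⨅ j, (hermAdd (∑ i, v i • K i)).eigenvalues j} Fmin := by
  have : Nonempty (Fin n) := ⟨⟨0, hn⟩⟩
  obtain ⟨⟨ρ, hρ, hρ1, rfl⟩, hmin⟩ := hF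
  rw [← norm_traceVector] at hFpos ⊢
  have hnorm_star (v : Fin d → ℂ) : ‖WithLp.toLp 2 (star v)‖ = 1 ↔ ∑ i, ‖v i‖ ^ 2 = 1 := by
    simp [EuclideanSpace.norm_eq]
  have hC : Convex ℝ (traceVector K '' densityMatrices ℂ (Fin n)) :=
    convex_densityMatrices.linear_image ((traceVector K).restrictScalars ℝ)
  have hduality := hC.isGreatest_isLeast_inner_of_forall_norm_le ⟨ρ, ⟨hρ, hρ1⟩, rfl⟩
    (by
      rintro _ ⟨σ, hσ, rfl⟩
      simpa [norm_traceVector] using hmin ⟨σ, hσ.1, hσ.2, rfl⟩)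
    (norm_pos_iff.1 hFpos)
  convert hduality using 1
  ext m
  constructor
  · rintro ⟨v, hv, rfl⟩
    exact ⟨_, (hnorm_star v).2 hv, isLeast_inner_traceVector K v (hermAdd _)⟩
  · rintro ⟨u, hu, hm⟩
    refine ⟨star u.ofLp, ?_, ?_⟩
    · rwa [← hnorm_star, star_star]
    · have h := isLeast_inner_traceVector K (star u.ofLp) (hermAdd _)
      rw [star_star, WithLp.toLp_ofLp] at h
      exact hm.unique h

/-- main theorem, nonzero-fidelity case: with
`F_min = min_ρ √(∑ i |Tr(ρ K i)|²)` over density matrices `ρ`, if `F_min > 0` then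
`F_min = max_v (1/2) λ_min(∑ i v i K i + (∑ i v i K i)ᴴ)` over unit `v ∈ ℂ^d`. -/
theorem Fmin_eq_cos_time_energy_cost {n d : ℕ} (hn : 0 < n) (hd : 0 < d)
    (K : Fin d → Matrix (Fin n) (Fin n) ℂ)
    (hK : ∑ i, (K i)ᴴ * K i = 1)
    (Fmin : ℝ)
    (hF : IsLeast {x : ℝ | ∃ ρ : Matrix (Fin n) (Fin n) ℂ, ρ.PosSemidef ∧ ρ.trace = 1 ∧
        x = Real.sqrt (∑ i, ‖(ρ * K i).trace‖ ^ 2)} Fmin)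
    (hFpos : 0 < Fmin) :
    IsGreatest {x : ℝ | ∃ v : Fin d → ℂ, ∑ i, ‖v i‖ ^ 2 = 1 ∧
        x = (1/2) * ⨅ j, (hermAdd (∑ i, v i • K i)).eigenvalues j} Fmin :=
  Fmin_eq_cos_time_energy_cost_general hn K Fmin hF hFpos

end
end

section
/- Let K be a quantum channel on C^n with Kraus operators K_1,...,K_d, and let (ρ̃, w̃) be optimal for F_min(K) = min_ρ max_w |∑_i w_i Tr(ρ K_i)| with w̃_i = conj(Tr(ρ̃ K_i))/F_min(K) (assuming F_min(K) > 0). Then there is no unit vector ψ ∈ C^n with 0 ≤ Re(⟨ψ| ∑_i w̃_i K_i |ψ⟩) < F_min(K). -/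
open Matrix
open scoped ComplexOrder InnerProductSpace

/-!
Write `Φ ρ = (Tr(ρ K_i))_i ∈ ℂ^d`, a linear function of `ρ`, so that the objective is `‖Φ ρ‖`.
Moving `ρ̃` towards `P = |ψ⟩⟨ψ|` changes `‖Φ ·‖²` at first order by
`2 t Re ⟪Φ ρ̃, Φ P - Φ ρ̃⟫ = 2 t Fmin (Re⟨ψ|∑ w̃_i K_i|ψ⟩ - Fmin)`, which is negative, so for small
`t > 0` the density matrix `ρ̃ + t (P - ρ̃)` beats the optimum `ρ̃`.
-/

open RCLike in
theorem exists_norm_add_smul_lt {𝕜 E : Type*} [RCLike 𝕜] [NormedAddCommGroup E]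
    [InnerProductSpace 𝕜 E] {u w : E} (h : re ⟪u, w⟫_𝕜 < 0) :
    ∃ t ∈ Set.Ioc (0 : ℝ) 1, ‖u + (t : 𝕜) • w‖ < ‖u‖ := by
  set a := re ⟪u, w⟫_𝕜
  have hc : 0 < -a / (‖w‖ ^ 2 + 1) := div_pos (neg_pos.mpr h) (by positivity)
  set t := min 1 (-a / (‖w‖ ^ 2 + 1))
  have ht0 : 0 < t := lt_min one_pos hc
  have htw : t * ‖w‖ ^ 2 < -a :=
    calc t * ‖w‖ ^ 2 ≤ -a / (‖w‖ ^ 2 + 1) * ‖w‖ ^ 2 := by gcongr; exact min_le_right _ _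
      _ < -a / (‖w‖ ^ 2 + 1) * (‖w‖ ^ 2 + 1) := by gcongr; exact lt_add_one _
      _ = -a := div_mul_cancel₀ _ (by positivity)
  have hsq : ‖u + (t : 𝕜) • w‖ ^ 2 = ‖u‖ ^ 2 + t * (2 * a + t * ‖w‖ ^ 2) := by
    rw [@norm_add_sq 𝕜, inner_smul_right, re_ofReal_mul, norm_smul, norm_ofReal, abs_of_pos ht0]
    ring
  refine ⟨t, ⟨ht0, min_le_left _ _⟩, ?_⟩
  rw [← pow_lt_pow_iff_left₀ (norm_nonneg _) (norm_nonneg _) two_ne_zero, hsq]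
  nlinarith

theorem Matrix.PosSemidef.add_smul_sub {m R : Type*} [Fintype m] [CommRing R] [PartialOrder R]
    [StarRing R] [StarOrderedRing R] {A B : Matrix m m R} (hA : A.PosSemidef)
    (hB : B.PosSemidef) {t : R} (ht0 : 0 ≤ t) (ht1 : t ≤ 1) : (A + t • (B - A)).PosSemidef := by
  have hconvex : A + t • (B - A) = (1 - t) • A + t • B := by module
  rw [hconvex]
  exact (hA.smul (sub_nonneg.mpr ht1)).add (hB.smul ht0)

theorem Matrix.trace_vecMulVec_mul {m R : Type*} [Fintype m] [CommSemiring R] (a b : m → R)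
    (M : Matrix m m R) : (vecMulVec a b * M).trace = b ⬝ᵥ M *ᵥ a := by
  rw [vecMulVec_mul, trace_vecMulVec, dotProduct_comm, dotProduct_mulVec]

section KrausTraceMap

variable {n d : ℕ} (K : Fin d → Matrix (Fin n) (Fin n) ℂ)

def krausTraceMap : Matrix (Fin n) (Fin n) ℂ →ₗ[ℂ] EuclideanSpace ℂ (Fin d) where
  toFun ρ := WithLp.toLp 2 fun i => (ρ * K i).trace
  map_add' ρ σ := by ext i; simp [add_mul]
  map_smul' c ρ := by ext i; simp

theorem norm_krausTraceMap (ρ : Matrix (Fin n) (Fin n) ℂ) :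
    ‖krausTraceMap K ρ‖ = √(∑ i, ‖(ρ * K i).trace‖ ^ 2) :=
  EuclideanSpace.norm_eq _

theorem inner_krausTraceMap (ρ σ : Matrix (Fin n) (Fin n) ℂ) :
    ⟪krausTraceMap K ρ, krausTraceMap K σ⟫_ℂ =
      ∑ i, starRingEnd ℂ (ρ * K i).trace * (σ * K i).trace := by
  simp [krausTraceMap, PiLp.inner_apply, mul_comm]

end KrausTraceMap

theorem no_state_below_Fmin_general {n d : ℕ}
    (K : Fin d → Matrix (Fin n) (Fin n) ℂ)
    (ρt : Matrix (Fin n) (Fin n) ℂ) (hρt : ρt.PosSemidef) (htr : ρt.trace = 1)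
    (Fmin : ℝ)
    (hFval : Fmin = Real.sqrt (∑ i, ‖(ρt * K i).trace‖ ^ 2))
    (hopt : ∀ ρ : Matrix (Fin n) (Fin n) ℂ, ρ.PosSemidef → ρ.trace = 1 →
      Fmin ≤ Real.sqrt (∑ i, ‖(ρ * K i).trace‖ ^ 2))
    (hFpos : 0 < Fmin)
    (wt : Fin d → ℂ)
    (hwt : ∀ i, wt i = starRingEnd ℂ ((ρt * K i).trace) / (Fmin : ℂ)) :
    ¬ ∃ ψ : Fin n → ℂ, star ψ ⬝ᵥ ψ = 1 ∧
        0 ≤ (star ψ ⬝ᵥ (∑ i, wt i • K i).mulVec ψ).re ∧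
        (star ψ ⬝ᵥ (∑ i, wt i • K i).mulVec ψ).re < Fmin := by
  rintro ⟨ψ, hψ, -, hlt⟩
  set Φ := krausTraceMap K
  set P := vecMulVec ψ (star ψ)
  have hΦρt : ‖Φ ρt‖ = Fmin := by rw [norm_krausTraceMap, hFval]
  have hinner : ⟪Φ ρt, Φ P⟫_ℂ = Fmin * star ψ ⬝ᵥ (∑ i, wt i • K i) *ᵥ ψ := by
    simp only [Φ, P, inner_krausTraceMap, trace_vecMulVec_mul, hwt, sum_mulVec, dotProduct_sum,
      smul_mulVec, dotProduct_smul, smul_eq_mul, Finset.mul_sum]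
    refine Finset.sum_congr rfl fun i _ => ?_
    field_simp [hFpos.ne']
  have hdescent : RCLike.re ⟪Φ ρt, Φ P - Φ ρt⟫_ℂ < 0 := by
    rw [inner_sub_right, map_sub, inner_self_eq_norm_sq, hinner, hΦρt, RCLike.re_to_complex,
      Complex.re_ofReal_mul, sq, ← mul_sub]
    exact mul_neg_of_pos_of_neg hFpos (sub_neg.mpr hlt)
  obtain ⟨t, ⟨ht0, ht1⟩, hdecrease⟩ := exists_norm_add_smul_lt hdescent
  have hρ : (ρt + (t : ℂ) • (P - ρt)).PosSemidef :=
    hρt.add_smul_sub (posSemidef_vecMulVec_self_star ψ) (by exact_mod_cast ht0.le)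
      (by exact_mod_cast ht1)
  have htrρ : (ρt + (t : ℂ) • (P - ρt)).trace = 1 := by
    simp [P, htr, trace_sub, dotProduct_comm ψ, hψ]
  have hge := hopt _ hρ htrρ
  rw [← norm_krausTraceMap, map_add, map_smul, map_sub] at hge
  exact (hge.trans_lt hdecrease).ne' hΦρt

/-- Lemma 1: for an optimal density matrix `ρ̃` achieving
`F_min(𝒦) = min_ρ max_w |∑ i w i Tr(ρ K i)| = √(∑ i |Tr(ρ̃ K i)|²) > 0` and the
optimal dual vector `w̃ i = conj (Tr(ρ̃ K i)) / F_min`, there is no unit vector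
`ψ` with `0 ≤ Re⟨ψ|∑ i w̃ i K i|ψ⟩ < F_min(𝒦)`. -/
theorem no_state_below_Fmin {n d : ℕ} (hn : 0 < n) (hd : 0 < d)
    (K : Fin d → Matrix (Fin n) (Fin n) ℂ)
    (hK : ∑ i, (K i)ᴴ * K i = 1)
    (ρt : Matrix (Fin n) (Fin n) ℂ) (hρt : ρt.PosSemidef) (htr : ρt.trace = 1)
    (Fmin : ℝ)
    (hFval : Fmin = Real.sqrt (∑ i, ‖(ρt * K i).trace‖ ^ 2))
    (hopt : ∀ ρ : Matrix (Fin n) (Fin n) ℂ, ρ.PosSemidef → ρ.trace = 1 →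
      Fmin ≤ Real.sqrt (∑ i, ‖(ρ * K i).trace‖ ^ 2))
    (hFpos : 0 < Fmin)
    (wt : Fin d → ℂ)
    (hwt : ∀ i, wt i = starRingEnd ℂ ((ρt * K i).trace) / (Fmin : ℂ)) :
    ¬ ∃ ψ : Fin n → ℂ, star ψ ⬝ᵥ ψ = 1 ∧
        0 ≤ (star ψ ⬝ᵥ (∑ i, wt i • K i).mulVec ψ).re ∧
        (star ψ ⬝ᵥ (∑ i, wt i • K i).mulVec ψ).re < Fmin :=
  no_state_below_Fmin_general K ρt hρt htr Fmin hFval hopt hFpos wt hwt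
end

section
/- Let K be a quantum channel on C^n with Kraus operators K_1,...,K_d, F_min(K) > 0, and w̃ the optimal unit vector as in Eq. (9). Then there exists a unit vector ψ ∈ C^n such that ⟨ψ| ∑_i w̃_i K_i |ψ⟩ = F_min(K) exactly (as a real number). -/
/-!
With `M = ∑ i, w̃ i • K i`, the choice of `w̃` gives `Tr (ρ̃ M) = (∑ i, |Tr (ρ̃ Kᵢ)|²) / F = F`.
Writing `ρ̃ = ∑ j, λⱼ |uⱼ⟩⟨uⱼ|` spectrally, `Tr (ρ̃ M) = ∑ j, λⱼ ⟨uⱼ|M|uⱼ⟩` is a convex combination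
of points of the numerical range of `M`, hence lies in it by the Toeplitz–Hausdorff theorem.
That theorem is proved classically: an affine change moves the two endpoints to `0` and `1`, a phase
on the second vector makes the cross term real, and the intermediate value theorem along the
segment between the two vectors reaches every point of `[0, 1]`.
-/

open Matrix
open scoped ComplexOrder InnerProductSpace ComplexConjugate

lemma Complex.exists_norm_eq_one_im_mul_eq_zero (w : ℂ) : ∃ e : ℂ, ‖e‖ = 1 ∧ (e * w).im = 0 := by
  refine ⟨exp (-w.arg * I), by exact_mod_cast norm_exp_ofReal_mul_I (-w.arg), ?_⟩
  have h : exp (-w.arg * I) * w = ‖w‖ := by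
    calc exp (-w.arg * I) * w = exp (-w.arg * I) * (‖w‖ * exp (w.arg * I)) := by
          rw [norm_mul_exp_arg_mul_I]
      _ = ‖w‖ := by rw [mul_left_comm, ← exp_add, neg_mul, neg_add_cancel, exp_zero, mul_one]
  rw [h, ofReal_im]

namespace LinearMap

variable {E : Type*} [NormedAddCommGroup E] [InnerProductSpace ℂ E] (T : E →ₗ[ℂ] E)

def numericalRange : Set ℂ := {z | ∃ x : E, ‖x‖ = 1 ∧ ⟪x, T x⟫_ℂ = z}

lemma inner_map_self_div_sq_norm_mem_numericalRange {v : E} (hv : v ≠ 0) :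
    ⟪v, T v⟫_ℂ / (‖v‖ ^ 2 : ℂ) ∈ T.numericalRange := by
  refine ⟨(‖v‖⁻¹ : ℂ) • v, ?_, ?_⟩
  · rw [norm_smul, norm_inv, Complex.norm_real, norm_norm,
      inv_mul_cancel₀ (norm_ne_zero_iff.mpr hv)]
  · rw [map_smul, inner_smul_left, inner_smul_right, map_inv₀, Complex.conj_ofReal]
    field_simp

lemma inner_map_self_smul (c : ℂ) (x : E) :
    ⟪c • x, T (c • x)⟫_ℂ = conj c * c * ⟪x, T x⟫_ℂ := by
  rw [map_smul, inner_smul_left, inner_smul_right, mul_assoc]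

lemma inner_map_self_add (x y : E) :
    ⟪x + y, T (x + y)⟫_ℂ = ⟪x, T x⟫_ℂ + (⟪x, T y⟫_ℂ + ⟪y, T x⟫_ℂ) + ⟪y, T y⟫_ℂ := by
  simp only [map_add, inner_add_left, inner_add_right]
  ring

lemma ofReal_mem_numericalRange_of_im_cross_eq_zero {x y : E} (hx : x ≠ 0) (hy : ‖y‖ = 1)
    (hTx : ⟪x, T x⟫_ℂ = 0) (hTy : ⟪y, T y⟫_ℂ = 1)
    (hcross : (⟪x, T y⟫_ℂ + ⟪y, T x⟫_ℂ).im = 0) {s : ℝ} (hs : s ∈ Set.Icc (0 : ℝ) 1) :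
    (s : ℂ) ∈ T.numericalRange := by
  set c := ⟪x, T y⟫_ℂ + ⟪y, T x⟫_ℂ
  have hc : ⟪x, T y⟫_ℂ + ⟪y, T x⟫_ℂ = (c.re : ℂ) :=
    Complex.ext rfl (by rw [Complex.ofReal_im]; exact hcross)
  set φ : ℝ → E := fun t ↦ ((1 - t : ℝ) : ℂ) • x + (t : ℂ) • y
  have hq : ∀ t, ⟪φ t, T (φ t)⟫_ℂ = (((1 - t) * t * c.re + t ^ 2 : ℝ) : ℂ) := by
    intro t
    simp only [φ, inner_map_self_add, map_smul, inner_smul_left, inner_smul_right, hTx, hTy,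
      Complex.conj_ofReal]
    push_cast
    linear_combination ((1 - t : ℂ) * t) * hc
  -- a zero of `φ` would give `t² ⟪y, T y⟫ = (1 - t)² ⟪x, T x⟫ = 0`, so `t = 0` and `x = 0`
  have hφ : ∀ t, φ t ≠ 0 := by
    intro t h0
    have hyx : (t : ℂ) • y = -(((1 - t : ℝ) : ℂ) • x) := eq_neg_of_add_eq_zero_right h0
    have := congrArg (fun v ↦ ⟪v, T v⟫_ℂ) hyx
    simp only [inner_map_self_smul, ← neg_one_smul ℂ (_ • x), smul_smul, hTx, hTy] at this
    have ht : t = 0 := by simpa [Complex.conj_ofReal] using this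
    simp [φ, ht, hx] at h0
  set f : ℝ → ℝ := fun t ↦ ((1 - t) * t * c.re + t ^ 2) / ‖φ t‖ ^ 2
  have hf : Continuous f :=
    Continuous.div (by fun_prop) (by fun_prop) fun t ↦ pow_ne_zero 2 (norm_ne_zero_iff.mpr (hφ t))
  have hf0 : f 0 = 0 := by simp [f]
  have hf1 : f 1 = 1 := by simp [f, φ, hy]
  obtain ⟨t, ht, hft⟩ := intermediate_value_Icc zero_le_one hf.continuousOn (by rwa [hf0, hf1])
  have hft' : (f t : ℂ) = ⟪φ t, T (φ t)⟫_ℂ / (‖φ t‖ ^ 2 : ℂ) := by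
    rw [hq]; push_cast [f]; rfl
  rw [← hft, hft']
  exact T.inner_map_self_div_sq_norm_mem_numericalRange (hφ t)

lemma ofReal_mem_numericalRange_of_inner_map_self_eq_zero_one {x y : E} (hx : x ≠ 0) (hy : ‖y‖ = 1)
    (hTx : ⟪x, T x⟫_ℂ = 0) (hTy : ⟪y, T y⟫_ℂ = 1) {s : ℝ} (hs : s ∈ Set.Icc (0 : ℝ) 1) :
    (s : ℂ) ∈ T.numericalRange := by
  obtain ⟨e, he, him⟩ :=
    Complex.exists_norm_eq_one_im_mul_eq_zero (⟪x, T y⟫_ℂ - conj ⟪y, T x⟫_ℂ)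
  have hee : conj e * e = 1 := by
    rw [← Complex.normSq_eq_conj_mul_self, Complex.normSq_eq_norm_sq, he]; norm_num
  refine T.ofReal_mem_numericalRange_of_im_cross_eq_zero hx (y := e • y) ?_ hTx ?_ ?_ hs
  · rw [norm_smul, he, hy, one_mul]
  · rw [inner_map_self_smul, hTy, hee, one_mul]
  · rw [map_smul, inner_smul_right, inner_smul_left, ← him]
    simp only [Complex.add_im, Complex.mul_im, Complex.sub_re, Complex.sub_im, Complex.conj_re,
      Complex.conj_im]
    ring

theorem convex_numericalRange : Convex ℝ T.numericalRange := by
  rintro _ ⟨x, hx, rfl⟩ _ ⟨y, hy, rfl⟩ a b ha hb hab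
  set z₁ := ⟪x, T x⟫_ℂ
  set z₂ := ⟪y, T y⟫_ℂ
  by_cases h : z₁ = z₂
  · rw [← h, ← add_smul, hab, one_smul]
    exact ⟨x, hx, rfl⟩
  have hne : z₂ - z₁ ≠ 0 := sub_ne_zero.mpr (Ne.symm h)
  set S : E →ₗ[ℂ] E := (z₂ - z₁)⁻¹ • (T - z₁ • LinearMap.id)
  have hS : ∀ v : E, ‖v‖ = 1 → ⟪v, S v⟫_ℂ = (z₂ - z₁)⁻¹ * (⟪v, T v⟫_ℂ - z₁) := by
    intro v hv
    simp [S, inner_self_eq_norm_sq_to_K, hv]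
  obtain ⟨ψ, hψ, hSψ⟩ := S.ofReal_mem_numericalRange_of_inner_map_self_eq_zero_one
    (x := x) (by rintro rfl; simp at hx) hy (by rw [hS x hx, sub_self, mul_zero])
    (by rw [hS y hy, inv_mul_cancel₀ hne]) ⟨hb, by linarith⟩
  refine ⟨ψ, hψ, ?_⟩
  rw [hS ψ hψ, inv_mul_eq_iff_eq_mul₀ hne] at hSψ
  obtain rfl : a = 1 - b := by linarith
  rw [Complex.real_smul, Complex.real_smul]
  push_cast
  linear_combination hSψ

end LinearMap

namespace Matrix

variable {ι : Type*} [Fintype ι] [DecidableEq ι]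

lemma IsHermitian.trace_mul_eq_sum_eigenvalues_mul_inner {𝕜 : Type*} [RCLike 𝕜]
    {A : Matrix ι ι 𝕜} (hA : A.IsHermitian) (M : Matrix ι ι 𝕜) :
    (A * M).trace = ∑ j, (hA.eigenvalues j : 𝕜) *
      ⟪hA.eigenvectorBasis j, toEuclideanLin M (hA.eigenvectorBasis j)⟫_𝕜 := by
  rw [trace_mul_comm, ← trace_toLin_eq _ (EuclideanSpace.basisFun ι 𝕜).toBasis,
    ← toEuclideanLin_eq_toLin_orthonormal, LinearMap.trace_eq_sum_inner _ hA.eigenvectorBasis]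
  refine Finset.sum_congr rfl fun j _ ↦ ?_
  have hAu : toEuclideanLin A (hA.eigenvectorBasis j) =
      (hA.eigenvalues j : 𝕜) • hA.eigenvectorBasis j := by
    ext i
    simp [hA.mulVec_eigenvectorBasis, RCLike.real_smul_eq_coe_mul]
  rw [← inner_smul_right, ← map_smul, ← hAu]
  congr 1
  ext i
  simp [mulVec_mulVec]

lemma PosSemidef.trace_mul_mem_numericalRange {ρ : Matrix ι ι ℂ} (hρ : ρ.PosSemidef)
    (htr : ρ.trace = 1) (M : Matrix ι ι ℂ) :
    (ρ * M).trace ∈ (toEuclideanLin M).numericalRange := by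
  rw [hρ.isHermitian.trace_mul_eq_sum_eigenvalues_mul_inner]
  have hsum : ∑ j, hρ.isHermitian.eigenvalues j = 1 := by
    simpa [htr, eq_comm] using congrArg Complex.re hρ.isHermitian.trace_eq_sum_eigenvalues
  simp only [← RCLike.real_smul_eq_coe_mul]
  exact (LinearMap.convex_numericalRange _).sum_mem (fun j _ ↦ hρ.eigenvalues_nonneg j) hsum
    fun j _ ↦ ⟨_, hρ.isHermitian.eigenvectorBasis.orthonormal.1 j, rfl⟩

end Matrix

theorem exists_state_achieving_Fmin_general {n d : ℕ}
    (K : Fin d → Matrix (Fin n) (Fin n) ℂ)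
    (ρt : Matrix (Fin n) (Fin n) ℂ) (hρt : ρt.PosSemidef) (htr : ρt.trace = 1)
    (Fmin : ℝ)
    (hFval : Fmin = Real.sqrt (∑ i, ‖(ρt * K i).trace‖ ^ 2))
    (wt : Fin d → ℂ)
    (hwt : ∀ i, wt i = starRingEnd ℂ ((ρt * K i).trace) / (Fmin : ℂ)) :
    ∃ ψ : Fin n → ℂ, star ψ ⬝ᵥ ψ = 1 ∧
      star ψ ⬝ᵥ (∑ i, wt i • K i).mulVec ψ = (Fmin : ℂ) := by
  have htrace : (ρt * ∑ i, wt i • K i).trace = Fmin := by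
    calc (ρt * ∑ i, wt i • K i).trace
        = ∑ i, wt i * (ρt * K i).trace := by simp [Matrix.mul_sum, trace_sum]
      _ = ((∑ i, ‖(ρt * K i).trace‖ ^ 2 : ℝ) : ℂ) / Fmin := by
        simp only [hwt, div_mul_eq_mul_div, ← Finset.sum_div, Complex.conj_mul']
        push_cast; rfl
      _ = Fmin := by
        rw [← Real.sq_sqrt (by positivity : (0 : ℝ) ≤ ∑ i, ‖(ρt * K i).trace‖ ^ 2), ← hFval]
        push_cast
        rw [sq, mul_self_div_self]
  obtain ⟨ψ, hψ, hψM⟩ := hρt.trace_mul_mem_numericalRange htr (∑ i, wt i • K i)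
  refine ⟨ψ.ofLp, ?_, ?_⟩
  · rw [dotProduct_comm, ← EuclideanSpace.inner_eq_star_dotProduct, inner_self_eq_norm_sq_to_K,
      hψ, RCLike.ofReal_one, one_pow]
  · rw [← htrace, ← hψM, EuclideanSpace.inner_eq_star_dotProduct, dotProduct_comm]
    rfl

/-- Lemma 2: for an optimal density matrix `ρ̃` achieving
`F_min(𝒦) = min_ρ max_w |∑ i w i Tr(ρ K i)| = √(∑ i |Tr(ρ̃ K i)|²) > 0` and the
optimal dual vector `w̃ i = conj (Tr(ρ̃ K i)) / F_min`, there exists a unit vector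
`ψ` with `⟨ψ|∑ i w̃ i K i|ψ⟩ = F_min(𝒦)` exactly, as a real number. -/
theorem exists_state_achieving_Fmin {n d : ℕ} (hn : 0 < n) (hd : 0 < d)
    (K : Fin d → Matrix (Fin n) (Fin n) ℂ)
    (hK : ∑ i, (K i)ᴴ * K i = 1)
    (ρt : Matrix (Fin n) (Fin n) ℂ) (hρt : ρt.PosSemidef) (htr : ρt.trace = 1)
    (Fmin : ℝ)
    (hFval : Fmin = Real.sqrt (∑ i, ‖(ρt * K i).trace‖ ^ 2))
    (hopt : ∀ ρ : Matrix (Fin n) (Fin n) ℂ, ρ.PosSemidef → ρ.trace = 1 →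
      Fmin ≤ Real.sqrt (∑ i, ‖(ρ * K i).trace‖ ^ 2))
    (hFpos : 0 < Fmin)
    (wt : Fin d → ℂ)
    (hwt : ∀ i, wt i = starRingEnd ℂ ((ρt * K i).trace) / (Fmin : ℂ)) :
    ∃ ψ : Fin n → ℂ, star ψ ⬝ᵥ ψ = 1 ∧
      star ψ ⬝ᵥ (∑ i, wt i • K i).mulVec ψ = (Fmin : ℂ) :=
  exists_state_achieving_Fmin_general K ρt hρt htr Fmin hFval wt hwt
end

section
/- Let K be a quantum channel on C^n with F_min(K) > 0 and w̃ the optimal unit vector. Then F_min(K) = min over unit vectors ψ ∈ C^n of Re(⟨ψ| ∑_i w̃_i K_i |ψ⟩) = (1/2)λ_min(∑_i w̃_i K_i + (∑_i w̃_i K_i)†). -/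
/-!
The map `v : ρ ↦ (Tr(ρ Kᵢ))ᵢ` is linear, so `ρ̃` minimises the Euclidean norm of `v` over the
convex set of density matrices. The first-order optimality condition
`⟪v ρ̃, v ρ - v ρ̃⟫ ≥ 0` is, after dividing by `F_min = ‖v ρ̃‖`, the inequality
`Re Tr(ρ M) ≥ F_min` for every density matrix `ρ`, where `M = ∑ᵢ w̃ᵢ Kᵢ`, with equality at `ρ̃`.
Pure states give the lower bound on `Re⟨ψ|M|ψ⟩`. Since `Re Tr(ρ M) = ½ Re Tr(ρ (M + M†))` and
the expectation of a Hermitian matrix in any state is at least its least eigenvalue, `ρ̃` forces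
`λ_min(M + M†) ≤ 2 F_min`, while a corresponding eigenvector attains `Re⟨ψ|M|ψ⟩ = λ_min / 2`.
-/

open Matrix
open scoped ComplexOrder

noncomputable section

open Filter Topology
open scoped InnerProductSpace

theorem inner_nonneg_of_forall_norm_le_norm_add_smul {E : Type*} [NormedAddCommGroup E]
    [InnerProductSpace ℝ E] {x e : E} (h : ∀ t : ℝ, 0 < t → t ≤ 1 → ‖x‖ ≤ ‖x + t • e‖) :
    0 ≤ ⟪x, e⟫_ℝ := by
  have hpos : ∀ t : ℝ, 0 < t → t ≤ 1 → 0 ≤ 2 * ⟪x, e⟫_ℝ + t * ‖e‖ ^ 2 := fun t ht0 ht1 => by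
    have hsq := pow_le_pow_left₀ (norm_nonneg _) (h t ht0 ht1) 2
    rw [norm_add_sq_real, inner_smul_right, norm_smul, Real.norm_of_nonneg ht0.le] at hsq
    exact nonneg_of_mul_nonneg_right (by nlinarith) ht0
  have hlim : Tendsto (fun t : ℝ => 2 * ⟪x, e⟫_ℝ + t * ‖e‖ ^ 2) (𝓝[>] 0) (𝓝 (2 * ⟪x, e⟫_ℝ)) :=
    ((continuous_const.add (continuous_id.mul continuous_const)).tendsto' 0 _
      (by simp)).mono_left nhdsWithin_le_nhds
  have := ge_of_tendsto hlim <| by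
    filter_upwards [Ioc_mem_nhdsGT one_pos] with t ht using hpos t ht.1 ht.2
  linarith

section TraceVec

variable {ι m : Type*} [Fintype m]

def traceVec (K : ι → Matrix m m ℂ) : Matrix m m ℂ →ₗ[ℂ] EuclideanSpace ℂ ι where
  toFun ρ := WithLp.toLp 2 fun i => (ρ * K i).trace
  map_add' ρ σ := by ext i; simp [add_mul]
  map_smul' c ρ := by ext i; simp

@[simp]
lemma traceVec_apply (K : ι → Matrix m m ℂ) (ρ : Matrix m m ℂ) (i : ι) :
    traceVec K ρ i = (ρ * K i).trace := rfl

lemma norm_traceVec [Fintype ι] (K : ι → Matrix m m ℂ) (ρ : Matrix m m ℂ) :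
    ‖traceVec K ρ‖ = √(∑ i, ‖(ρ * K i).trace‖ ^ 2) :=
  EuclideanSpace.norm_eq _

theorem inner_traceVec_sub_nonneg [Fintype ι] {K : ι → Matrix m m ℂ} {ρ₀ ρ : Matrix m m ℂ}
    (hmin : ∀ σ : Matrix m m ℂ, σ.PosSemidef → σ.trace = 1 → ‖traceVec K ρ₀‖ ≤ ‖traceVec K σ‖)
    (hρ₀ : ρ₀.PosSemidef) (htr₀ : ρ₀.trace = 1) (hρ : ρ.PosSemidef) (htr : ρ.trace = 1) :
    0 ≤ ⟪traceVec K ρ₀, traceVec K ρ - traceVec K ρ₀⟫_ℝ := by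
  refine inner_nonneg_of_forall_norm_le_norm_add_smul fun t ht0 ht1 => ?_
  have hσ : ((1 - t) • ρ₀ + t • ρ).PosSemidef :=
    (hρ₀.smul (sub_nonneg.2 ht1)).add (hρ.smul ht0.le)
  have hσtr : ((1 - t) • ρ₀ + t • ρ).trace = 1 := by
    simp [trace_add, trace_smul, htr₀, htr]
  have hlin : traceVec K ((1 - t) • ρ₀ + t • ρ) =
      traceVec K ρ₀ + t • (traceVec K ρ - traceVec K ρ₀) := by
    rw [map_add, LinearMap.map_smul_of_tower, LinearMap.map_smul_of_tower]
    module
  exact hlin ▸ hmin _ hσ hσtr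

theorem re_trace_mul_sum_smul_eq_inner [Fintype ι] {K : ι → Matrix m m ℂ} {ρ₀ : Matrix m m ℂ}
    {F : ℝ} {w : ι → ℂ} (hw : ∀ i, w i = starRingEnd ℂ ((ρ₀ * K i).trace) / F)
    (ρ : Matrix m m ℂ) :
    (ρ * ∑ i, w i • K i).trace.re = ⟪traceVec K ρ₀, traceVec K ρ⟫_ℝ / F := by
  simp only [Finset.mul_sum, trace_sum, mul_smul_comm, trace_smul, smul_eq_mul, Complex.re_sum,
    PiLp.inner_apply, Complex.inner, traceVec_apply, Finset.sum_div, hw]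
  refine Finset.sum_congr rfl fun i _ => ?_
  rw [← Complex.div_ofReal_re]
  congr 1
  ring

theorem le_re_trace_mul_sum_smul [Fintype ι] {K : ι → Matrix m m ℂ} {ρ₀ ρ : Matrix m m ℂ}
    (hmin : ∀ σ : Matrix m m ℂ, σ.PosSemidef → σ.trace = 1 → ‖traceVec K ρ₀‖ ≤ ‖traceVec K σ‖)
    (hρ₀ : ρ₀.PosSemidef) (htr₀ : ρ₀.trace = 1) {F : ℝ} (hF : F = ‖traceVec K ρ₀‖) (hFpos : 0 < F)
    {w : ι → ℂ} (hw : ∀ i, w i = starRingEnd ℂ ((ρ₀ * K i).trace) / F)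
    (hρ : ρ.PosSemidef) (htr : ρ.trace = 1) :
    F ≤ (ρ * ∑ i, w i • K i).trace.re := by
  have h := inner_traceVec_sub_nonneg hmin hρ₀ htr₀ hρ htr
  rw [inner_sub_right, real_inner_self_eq_norm_sq, ← hF] at h
  rw [re_trace_mul_sum_smul_eq_inner hw, le_div_iff₀ hFpos]
  nlinarith

theorem re_trace_mul_sum_smul_self [Fintype ι] {K : ι → Matrix m m ℂ} {ρ₀ : Matrix m m ℂ}
    {F : ℝ} (hF : F = ‖traceVec K ρ₀‖) (hFpos : 0 < F)
    {w : ι → ℂ} (hw : ∀ i, w i = starRingEnd ℂ ((ρ₀ * K i).trace) / F) :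
    (ρ₀ * ∑ i, w i • K i).trace.re = F := by
  rw [re_trace_mul_sum_smul_eq_inner hw, real_inner_self_eq_norm_sq, ← hF]
  field_simp

end TraceVec

theorem Matrix.IsHermitian.iInf_eigenvalues_mul_re_trace_le {𝕜 n : Type*} [RCLike 𝕜] [Fintype n]
    [DecidableEq n] {H ρ : Matrix n n 𝕜} (hH : H.IsHermitian) (hρ : ρ.PosSemidef) :
    (⨅ j, hH.eigenvalues j) * RCLike.re ρ.trace ≤ RCLike.re (ρ * H).trace := by
  set U : Matrix n n 𝕜 := (hH.eigenvectorUnitary : Matrix n n 𝕜)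
  set Q := star U * ρ * U
  have hQ : Q.PosSemidef := by
    simpa only [Q, star_eq_conjTranspose] using hρ.conjTranspose_mul_mul_same U
  have htrQ : Q.trace = ρ.trace := by
    rw [trace_mul_cycle, Unitary.mul_star_self_of_mem hH.eigenvectorUnitary.2, one_mul]
  have htrH : (ρ * H).trace = ∑ j, Q j j * hH.eigenvalues j := by
    conv_lhs => rw [hH.spectral_theorem, Unitary.conjStarAlgAut_apply]
    rw [← mul_assoc, ← mul_assoc, trace_mul_cycle, ← mul_assoc]
    simp [trace, mul_diagonal, Q, U]
  rw [htrH, ← htrQ, trace, map_sum, map_sum, Finset.mul_sum]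
  gcongr with j
  rw [RCLike.re_mul_ofReal, diag_apply, mul_comm (RCLike.re (Q j j))]
  exact mul_le_mul_of_nonneg_right (ciInf_le (Finite.bddBelow_range _) j)
    (RCLike.nonneg_iff.mp hQ.diag_nonneg).1

theorem Matrix.IsHermitian.exists_re_dotProduct_mulVec_eq_iInf_eigenvalues {𝕜 n : Type*}
    [RCLike 𝕜] [Fintype n] [DecidableEq n] [Nonempty n] {H : Matrix n n 𝕜} (hH : H.IsHermitian) :
    ∃ ψ : n → 𝕜, star ψ ⬝ᵥ ψ = 1 ∧ RCLike.re (star ψ ⬝ᵥ H *ᵥ ψ) = ⨅ j, hH.eigenvalues j := by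
  obtain ⟨j, hj⟩ := exists_eq_ciInf_of_finite (f := hH.eigenvalues)
  refine ⟨hH.eigenvectorBasis j, ?_, by rw [← hj, hH.eigenvalues_eq]⟩
  rw [dotProduct_comm, ← EuclideanSpace.inner_eq_star_dotProduct, inner_self_eq_norm_sq_to_K,
    hH.eigenvectorBasis.orthonormal.1 j]
  simp

theorem Matrix.trace_vecMulVec_star_mul {R n : Type*} [CommSemiring R] [StarRing R] [Fintype n]
    (ψ : n → R) (A : Matrix n n R) : (vecMulVec ψ (star ψ) * A).trace = star ψ ⬝ᵥ A *ᵥ ψ := by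
  rw [trace_mul_comm, mul_vecMulVec, trace_vecMulVec, dotProduct_comm]

theorem Matrix.re_trace_mul_add_conjTranspose {𝕜 n : Type*} [RCLike 𝕜] [Fintype n]
    {ρ : Matrix n n 𝕜} (hρ : ρ.IsHermitian) (M : Matrix n n 𝕜) :
    RCLike.re (ρ * (M + Mᴴ)).trace = 2 * RCLike.re (ρ * M).trace := by
  have hconj : (ρ * Mᴴ).trace = star (ρ * M).trace := by
    rw [← trace_conjTranspose, conjTranspose_mul, hρ.eq, trace_mul_comm]
  rw [mul_add, trace_add, hconj, map_add, RCLike.star_def, RCLike.conj_re]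
  ring

theorem Matrix.re_dotProduct_mulVec_add_conjTranspose {𝕜 n : Type*} [RCLike 𝕜] [Fintype n]
    (ψ : n → 𝕜) (M : Matrix n n 𝕜) :
    RCLike.re (star ψ ⬝ᵥ (M + Mᴴ) *ᵥ ψ) = 2 * RCLike.re (star ψ ⬝ᵥ M *ᵥ ψ) := by
  simpa only [trace_vecMulVec_star_mul] using
    re_trace_mul_add_conjTranspose (posSemidef_vecMulVec_self_star ψ).1 M

theorem Fmin_eq_min_re_quadratic_general {n d : ℕ} (hn : 0 < n)
    (K : Fin d → Matrix (Fin n) (Fin n) ℂ)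
    (ρt : Matrix (Fin n) (Fin n) ℂ) (hρt : ρt.PosSemidef) (htr : ρt.trace = 1)
    (Fmin : ℝ)
    (hFval : Fmin = Real.sqrt (∑ i, ‖(ρt * K i).trace‖ ^ 2))
    (hopt : ∀ ρ : Matrix (Fin n) (Fin n) ℂ, ρ.PosSemidef → ρ.trace = 1 →
      Fmin ≤ Real.sqrt (∑ i, ‖(ρ * K i).trace‖ ^ 2))
    (hFpos : 0 < Fmin)
    (wt : Fin d → ℂ)
    (hwt : ∀ i, wt i = starRingEnd ℂ ((ρt * K i).trace) / (Fmin : ℂ)) :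
    IsLeast {x : ℝ | ∃ ψ : Fin n → ℂ, star ψ ⬝ᵥ ψ = 1 ∧
        x = (star ψ ⬝ᵥ (∑ i, wt i • K i).mulVec ψ).re} Fmin ∧
    Fmin = (1/2) * ⨅ j, (hermAdd (∑ i, wt i • K i)).eigenvalues j := by
  set M := ∑ i, wt i • K i
  have hF : Fmin = ‖traceVec K ρt‖ := by rw [hFval, norm_traceVec]
  have hmin : ∀ σ : Matrix (Fin n) (Fin n) ℂ, σ.PosSemidef → σ.trace = 1 →
      ‖traceVec K ρt‖ ≤ ‖traceVec K σ‖ := fun σ hσ hσtr => by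
    rw [← hF, norm_traceVec]; exact hopt σ hσ hσtr
  have hpure : ∀ ψ : Fin n → ℂ, star ψ ⬝ᵥ ψ = 1 → Fmin ≤ (star ψ ⬝ᵥ M *ᵥ ψ).re := fun ψ hψ => by
    rw [← trace_vecMulVec_star_mul]
    exact le_re_trace_mul_sum_smul hmin hρt htr hF hFpos hwt (posSemidef_vecMulVec_self_star ψ)
      (by rw [trace_vecMulVec, dotProduct_comm, hψ])
  have hH := hermAdd M
  have hρtM : (ρt * M).trace.re = Fmin := re_trace_mul_sum_smul_self hF hFpos hwt
  have hle : ⨅ j, hH.eigenvalues j ≤ 2 * Fmin := by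
    simpa [htr, re_trace_mul_add_conjTranspose hρt.1, hρtM] using
      hH.iInf_eigenvalues_mul_re_trace_le hρt
  have : Nonempty (Fin n) := ⟨⟨0, hn⟩⟩
  obtain ⟨ψ₀, hψ₀, hval⟩ := hH.exists_re_dotProduct_mulVec_eq_iInf_eigenvalues
  rw [re_dotProduct_mulVec_add_conjTranspose, RCLike.re_to_complex] at hval
  have heq : (star ψ₀ ⬝ᵥ M *ᵥ ψ₀).re = Fmin := by linarith [hpure ψ₀ hψ₀]
  exact ⟨⟨⟨ψ₀, hψ₀, heq.symm⟩, fun x ⟨ψ, hψ, hx⟩ => hx ▸ hpure ψ hψ⟩, by linarith⟩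

/-- Lemma 3: for an optimal density matrix `ρ̃` achieving
`F_min(𝒦) = min_ρ max_w |∑ i w i Tr(ρ K i)| = √(∑ i |Tr(ρ̃ K i)|²) > 0` and the
optimal dual vector `w̃ i = conj (Tr(ρ̃ K i)) / F_min`, we have
`F_min(𝒦) = min_{unit ψ} Re⟨ψ|∑ i w̃ i K i|ψ⟩ = (1/2) λ_min(∑ i w̃ i K i + (∑ i w̃ i K i)ᴴ)`. -/
theorem Fmin_eq_min_re_quadratic {n d : ℕ} (hn : 0 < n) (hd : 0 < d)
    (K : Fin d → Matrix (Fin n) (Fin n) ℂ)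
    (hK : ∑ i, (K i)ᴴ * K i = 1)
    (ρt : Matrix (Fin n) (Fin n) ℂ) (hρt : ρt.PosSemidef) (htr : ρt.trace = 1)
    (Fmin : ℝ)
    (hFval : Fmin = Real.sqrt (∑ i, ‖(ρt * K i).trace‖ ^ 2))
    (hopt : ∀ ρ : Matrix (Fin n) (Fin n) ℂ, ρ.PosSemidef → ρ.trace = 1 →
      Fmin ≤ Real.sqrt (∑ i, ‖(ρ * K i).trace‖ ^ 2))
    (hFpos : 0 < Fmin)
    (wt : Fin d → ℂ)
    (hwt : ∀ i, wt i = starRingEnd ℂ ((ρt * K i).trace) / (Fmin : ℂ)) :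
    IsLeast {x : ℝ | ∃ ψ : Fin n → ℂ, star ψ ⬝ᵥ ψ = 1 ∧
        x = (star ψ ⬝ᵥ (∑ i, wt i • K i).mulVec ψ).re} Fmin ∧
    Fmin = (1/2) * ⨅ j, (hermAdd (∑ i, wt i • K i)).eigenvalues j :=
  Fmin_eq_min_re_quadratic_general hn K ρt hρt htr Fmin hFval hopt hFpos wt hwt

end
end

section
/- For the quantum depolarizing channel K_D(ρ) = qρ + (1−q)I/n with 0 ≤ q ≤ 1, the minimum entanglement fidelity F_min(K_D) = min over density matrices ρ of √(∑_i |Tr(ρ K_i)|²) (for any Kraus representation {K_i} of K_D) equals √(q + (1−q)/n²). -/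
/-!
Writing `E a c` for the matrix units, `(A * E a c * B) a c = A a a * B c c` gives
`∑ᵢ |Tr(ρ Kᵢ)|² = ∑ a c, Φ (ρ * E a c * ρᴴ) a c` with `Φ X = ∑ᵢ Kᵢ X Kᵢᴴ`, so the quantity depends
only on the channel, not on its Kraus representation. For the depolarizing channel this is
`q |Tr ρ|² + (1 - q) / n · ∑ a b, |ρ a b|²`. When `Tr ρ = 1`, Cauchy–Schwarz on the diagonal bounds
the last sum below by `1 / n`, and `ρ = I / n` attains the bound.
-/

open Matrix
open scoped ComplexOrder

namespace Matrix

variable {m R : Type*} [Fintype m]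

theorem norm_trace_sq_le_card_mul_sum_norm_sq [SeminormedAddCommGroup R] (A : Matrix m m R) :
    ‖A.trace‖ ^ 2 ≤ Fintype.card m * ∑ a, ∑ b, ‖A a b‖ ^ 2 := by
  calc ‖A.trace‖ ^ 2 ≤ (∑ a, ‖A a a‖) ^ 2 := by
        gcongr; exact norm_sum_le _ _
    _ ≤ Fintype.card m * ∑ a, ‖A a a‖ ^ 2 := sq_sum_le_card_mul_sum_sq
    _ ≤ Fintype.card m * ∑ a, ∑ b, ‖A a b‖ ^ 2 := by
        gcongr with a
        exact Finset.single_le_sum (f := fun b => ‖A a b‖ ^ 2) (fun _ _ => by positivity)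
          (Finset.mem_univ a)

theorem trace_mul_conjTranspose_self_eq_sum_norm_sq (A : Matrix m m ℂ) :
    (A * Aᴴ).trace = ((∑ a, ∑ b, ‖A a b‖ ^ 2 : ℝ) : ℂ) := by
  simp only [trace, diag, mul_apply, conjTranspose_apply, Complex.star_def, Complex.mul_conj,
    Complex.sq_norm]
  push_cast
  rfl

variable [DecidableEq m]

theorem sum_sum_norm_smul_one_apply_sq (c : ℂ) :
    ∑ a : m, ∑ b : m, ‖(c • (1 : Matrix m m ℂ)) a b‖ ^ 2 = Fintype.card m * ‖c‖ ^ 2 := by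
  simp [one_apply, apply_ite]

theorem mul_single_one_mul_apply_same [Semiring R] (A B : Matrix m m R) (a c : m) :
    (A * single a c (1 : R) * B) a c = A a a * B c c := by
  rw [mul_apply, Finset.sum_eq_single c]
  · rw [mul_single_apply_same, mul_one]
  · intro k _ hk
    rw [mul_single_apply_of_ne _ _ _ _ _ hk, zero_mul]
  · simp

theorem sum_sum_mul_single_one_mul_apply [CommSemiring R] (A B : Matrix m m R) :
    ∑ a : m, ∑ c : m, (A * single a c (1 : R) * B) a c = A.trace * B.trace := by
  simp only [mul_single_one_mul_apply_same, trace, diag, Finset.sum_mul_sum]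

theorem sum_trace_mul_single_one_mul [Semiring R] (A B : Matrix m m R) :
    ∑ a, (A * single a a (1 : R) * B).trace = (A * B).trace := by
  rw [← trace_sum, ← Finset.sum_mul, ← Finset.mul_sum, sum_single_one, mul_one]

end Matrix

section Kraus

variable {m ι : Type*} [Fintype m] [DecidableEq m] [Fintype ι]

theorem sum_norm_trace_mul_sq_eq_sum_kraus_apply (K : ι → Matrix m m ℂ) (ρ : Matrix m m ℂ) :
    ((∑ i, ‖(ρ * K i).trace‖ ^ 2 : ℝ) : ℂ) =
      ∑ a : m, ∑ c : m, (∑ i, K i * (ρ * single a c (1 : ℂ) * ρᴴ) * (K i)ᴴ) a c := by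
  have h : ∀ i, ((‖(ρ * K i).trace‖ ^ 2 : ℝ) : ℂ) =
      ∑ a : m, ∑ c : m, (K i * (ρ * single a c (1 : ℂ) * ρᴴ) * (K i)ᴴ) a c := by
    intro i
    have hassoc : ∀ a c : m, K i * (ρ * single a c (1 : ℂ) * ρᴴ) * (K i)ᴴ =
        K i * ρ * single a c (1 : ℂ) * (K i * ρ)ᴴ := by
      intro a c; simp only [conjTranspose_mul, Matrix.mul_assoc]
    simp only [hassoc, sum_sum_mul_single_one_mul_apply, trace_conjTranspose, trace_mul_comm ρ,
      Complex.star_def, Complex.mul_conj, Complex.sq_norm]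
  push_cast at h ⊢
  simp only [h, Matrix.sum_apply]
  rw [Finset.sum_comm]
  exact Finset.sum_congr rfl fun a _ => Finset.sum_comm

noncomputable def depolarizing (q : ℝ) (ρ : Matrix m m ℂ) : Matrix m m ℂ :=
  (q : ℂ) • ρ + ((((1 - q) / Fintype.card m : ℝ) : ℂ) * ρ.trace) • 1

theorem sum_sum_depolarizing_mul_single_one_mul_apply (q : ℝ) (ρ : Matrix m m ℂ) :
    ∑ a : m, ∑ c : m, depolarizing q (ρ * single a c (1 : ℂ) * ρᴴ) a c =
      ((q * ‖ρ.trace‖ ^ 2 + (1 - q) / Fintype.card m * ∑ a, ∑ b, ‖ρ a b‖ ^ 2 : ℝ) : ℂ) := by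
  simp only [depolarizing, Matrix.add_apply, Matrix.smul_apply, one_apply, smul_eq_mul,
    Finset.sum_add_distrib, ← Finset.mul_sum, sum_sum_mul_single_one_mul_apply, mul_ite, mul_one,
    mul_zero, Finset.sum_ite_eq, Finset.mem_univ, if_true, sum_trace_mul_single_one_mul,
    trace_mul_conjTranspose_self_eq_sum_norm_sq]
  rw [trace_conjTranspose, Complex.star_def, Complex.mul_conj, ← Complex.sq_norm]
  push_cast
  ring

theorem sum_norm_trace_mul_sq_of_depolarizing (K : ι → Matrix m m ℂ) (q : ℝ)
    (hK : ∀ ρ, ∑ i, K i * ρ * (K i)ᴴ = depolarizing q ρ) (ρ : Matrix m m ℂ) :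
    ∑ i, ‖(ρ * K i).trace‖ ^ 2 =
      q * ‖ρ.trace‖ ^ 2 + (1 - q) / Fintype.card m * ∑ a, ∑ b, ‖ρ a b‖ ^ 2 := by
  apply Complex.ofReal_injective
  simp only [sum_norm_trace_mul_sq_eq_sum_kraus_apply, hK,
    sum_sum_depolarizing_mul_single_one_mul_apply]

end Kraus

theorem depolarizing_Fmin_general {n d : ℕ} (hn : 0 < n)
    (q : ℝ) (hq1 : q ≤ 1)
    (K : Fin d → Matrix (Fin n) (Fin n) ℂ)
    (hrep : ∀ ρ : Matrix (Fin n) (Fin n) ℂ,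
      ∑ i, K i * ρ * (K i)ᴴ = (q : ℂ) • ρ + ((((1 - q) / n : ℝ) : ℂ) * ρ.trace) • 1) :
    IsLeast {x : ℝ | ∃ ρ : Matrix (Fin n) (Fin n) ℂ, ρ.PosSemidef ∧ ρ.trace = 1 ∧
        x = Real.sqrt (∑ i, ‖(ρ * K i).trace‖ ^ 2)}
      (Real.sqrt (q + (1 - q) / n ^ 2)) := by
  have hK : ∀ ρ, ∑ i, K i * ρ * (K i)ᴴ = depolarizing q ρ := by
    simpa only [depolarizing, Fintype.card_fin] using hrep
  have hn' : (0 : ℝ) < n := Nat.cast_pos.mpr hn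
  have hmixed : ((n : ℂ)⁻¹ • (1 : Matrix (Fin n) (Fin n) ℂ)).trace = 1 := by
    simp [hn.ne']
  refine ⟨⟨(n : ℂ)⁻¹ • 1, PosSemidef.one.smul (by positivity), hmixed, ?_⟩, ?_⟩
  · rw [sum_norm_trace_mul_sq_of_depolarizing K q hK, hmixed, sum_sum_norm_smul_one_apply_sq]
    simp only [norm_one, Fintype.card_fin, norm_inv, Complex.norm_natCast]
    field_simp
  · rintro _ ⟨ρ, -, hρ, rfl⟩
    have hbound := norm_trace_sq_le_card_mul_sum_norm_sq ρ
    rw [hρ, norm_one, one_pow, Fintype.card_fin] at hbound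
    rw [sum_norm_trace_mul_sq_of_depolarizing K q hK, hρ, norm_one, one_pow, mul_one,
      Fintype.card_fin]
    gcongr √(q + ?_)
    have hS : 1 / (n : ℝ) ≤ ∑ a, ∑ b, ‖ρ a b‖ ^ 2 := by
      rw [div_le_iff₀' hn']
      linarith
    calc (1 - q) / n ^ 2 = (1 - q) / n * (1 / n) := by ring
      _ ≤ (1 - q) / n * ∑ a, ∑ b, ‖ρ a b‖ ^ 2 := by gcongr

/-- for any Kraus representation `{K i}` of the depolarizing
channel `𝒦_D(ρ) = qρ + (1−q)I/n` with `0 ≤ q ≤ 1`, the minimum entanglement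
fidelity `min_ρ √(∑ i |Tr(ρ K i)|²)` over density matrices equals
`√(q + (1−q)/n²)`. -/
theorem depolarizing_Fmin {n d : ℕ} (hn : 0 < n) (hd : 0 < d)
    (q : ℝ) (hq0 : 0 ≤ q) (hq1 : q ≤ 1)
    (K : Fin d → Matrix (Fin n) (Fin n) ℂ)
    (hK : ∑ i, (K i)ᴴ * K i = 1)
    (hrep : ∀ ρ : Matrix (Fin n) (Fin n) ℂ,
      ∑ i, K i * ρ * (K i)ᴴ = (q : ℂ) • ρ + ((((1 - q) / n : ℝ) : ℂ) * ρ.trace) • 1) :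
    IsLeast {x : ℝ | ∃ ρ : Matrix (Fin n) (Fin n) ℂ, ρ.PosSemidef ∧ ρ.trace = 1 ∧
        x = Real.sqrt (∑ i, ‖(ρ * K i).trace‖ ^ 2)}
      (Real.sqrt (q + (1 - q) / n ^ 2)) :=
  depolarizing_Fmin_general hn q hq1 K hrep
end

section
/- Let U ∈ C^{n×n} be unitary with eigenvalues e^{iθ_j}, |θ_j| ≤ π/2. Then the minimum entanglement fidelity of the unitary channel ρ ↦ UρU†, namely min over density matrices ρ of |Tr(ρU)|, equals cos((θ_max − θ_min)/2). -/
/-!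
In an eigenbasis of `U`, `Tr(ρU) = ∑ⱼ pⱼ e^{iθⱼ}` where `p` is the diagonal of `Vᴴ ρ V`, a
probability vector, and every probability vector arises from a density matrix that is diagonal in
that basis. With `c` the midpoint of `[θ_min, θ_max]` and `w` its half-width, the real part of
`e^{-ic} Tr(ρU)` is `∑ⱼ pⱼ cos(θⱼ - c) ≥ cos w`, since `|θⱼ - c| ≤ w ≤ π`. The equal mixture of the
two extreme eigenvectors attains the bound, as `e^{ia} + e^{ib} = 2 cos((a-b)/2) e^{i(a+b)/2}`.
-/

open Matrix
open scoped ComplexOrder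

theorem Complex.exp_mul_I_add_exp_mul_I (a b : ℝ) :
    exp (a * I) + exp (b * I) = 2 * Real.cos ((a - b) / 2) * exp (((a + b) / 2 : ℝ) * I) := by
  rw [ofReal_cos, two_cos, add_mul, ← exp_add, ← exp_add]
  congr 2 <;> push_cast <;> ring

theorem Real.cos_half_sub_le_cos_sub_midpoint {a b t : ℝ} (ht : t ∈ Set.Icc b a)
    (hab : a - b ≤ 2 * Real.pi) : cos ((a - b) / 2) ≤ cos (t - (a + b) / 2) := by
  rw [← cos_abs (t - _)]
  exact cos_le_cos_of_nonneg_of_le_pi (abs_nonneg _) (by linarith)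
    (abs_le.mpr ⟨by linarith [ht.1], by linarith [ht.2]⟩)

section

variable {ι : Type*} [Fintype ι]

section Simplex

open Complex

theorem cos_half_sub_le_norm_sum_mul_exp {p : ι → ℝ} (hp : p ∈ stdSimplex ℝ ι) {θ : ι → ℝ}
    {a b : ℝ} (hθ : ∀ j, θ j ∈ Set.Icc b a) (hab : a - b ≤ 2 * Real.pi) :
    Real.cos ((a - b) / 2) ≤ ‖∑ j, (p j : ℂ) * exp (θ j * I)‖ := by
  set c := (a + b) / 2
  have hrotate : ∀ j, (exp ((-c : ℝ) * I) * ((p j : ℂ) * exp (θ j * I))).re =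
      p j * Real.cos (θ j - c) := fun j => by
    rw [mul_left_comm, ← exp_add, ← add_mul, ← ofReal_add, neg_add_eq_sub, re_ofReal_mul,
      exp_ofReal_mul_I_re]
  calc Real.cos ((a - b) / 2) = ∑ j, p j * Real.cos ((a - b) / 2) := by
        rw [← Finset.sum_mul, hp.2, one_mul]
    _ ≤ ∑ j, p j * Real.cos (θ j - c) := Finset.sum_le_sum fun j _ =>
        mul_le_mul_of_nonneg_left (Real.cos_half_sub_le_cos_sub_midpoint (hθ j) hab) (hp.1 j)
    _ = (exp ((-c : ℝ) * I) * ∑ j, (p j : ℂ) * exp (θ j * I)).re := by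
        rw [Finset.mul_sum, re_sum]
        exact Finset.sum_congr rfl fun j _ => (hrotate j).symm
    _ ≤ ‖exp ((-c : ℝ) * I) * ∑ j, (p j : ℂ) * exp (θ j * I)‖ := re_le_norm _
    _ = ‖∑ j, (p j : ℂ) * exp (θ j * I)‖ := by rw [norm_mul, norm_exp_ofReal_mul_I, one_mul]

theorem isLeast_norm_sum_mul_exp [DecidableEq ι] {θ : ι → ℝ} {jm jM : ι}
    (hθ : ∀ j, θ j ∈ Set.Icc (θ jm) (θ jM)) (hwidth : θ jM - θ jm ≤ Real.pi) :
    IsLeast ((fun p : ι → ℝ => ‖∑ j, (p j : ℂ) * exp (θ j * I)‖) '' stdSimplex ℝ ι)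
      (Real.cos ((θ jM - θ jm) / 2)) := by
  let p : ι → ℝ := (1 / 2 : ℝ) • Pi.single jM 1 + (1 / 2 : ℝ) • Pi.single jm 1
  have hp : p ∈ stdSimplex ℝ ι :=
    convex_stdSimplex ℝ ι (single_mem_stdSimplex ℝ jM) (single_mem_stdSimplex ℝ jm)
      (by norm_num) (by norm_num) (by norm_num)
  have hsum : ∑ j, (p j : ℂ) * exp (θ j * I) = (exp (θ jM * I) + exp (θ jm * I)) / 2 := by
    simp only [p, Pi.add_apply, Pi.smul_apply, smul_eq_mul, ofReal_add, ofReal_mul, add_mul,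
      Finset.sum_add_distrib, mul_assoc, ← Finset.mul_sum]
    rw [Fintype.sum_eq_single jM fun j hj => by simp [hj],
      Fintype.sum_eq_single jm fun j hj => by simp [hj]]
    simp only [Pi.single_eq_same, ofReal_one, one_mul]
    push_cast
    ring
  have hcos : 0 ≤ Real.cos ((θ jM - θ jm) / 2) :=
    Real.cos_nonneg_of_mem_Icc ⟨by linarith [(hθ jM).1], by linarith⟩
  refine ⟨⟨p, hp, ?_⟩, ?_⟩
  · dsimp only
    rw [hsum, exp_mul_I_add_exp_mul_I, norm_div, norm_mul, norm_mul, norm_exp_ofReal_mul_I,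
      norm_real, Real.norm_of_nonneg hcos]
    norm_num
  · rintro _ ⟨p, hp, rfl⟩
    exact cos_half_sub_le_norm_sum_mul_exp hp hθ (by linarith [Real.pi_pos])

end Simplex

theorem Matrix.trace_mul_mul_diagonal_mul [DecidableEq ι] {R : Type*} [CommSemiring R]
    (ρ V W : Matrix ι ι R) (d : ι → R) :
    (ρ * (V * diagonal d * W)).trace = ∑ j, (W * ρ * V) j j * d j := by
  rw [← Matrix.mul_assoc, trace_mul_comm, ← Matrix.mul_assoc, ← Matrix.mul_assoc]
  simp [trace, mul_diagonal]

theorem Matrix.PosSemidef.re_diag_mem_stdSimplex {A : Matrix ι ι ℂ} (hA : A.PosSemidef)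
    (htr : A.trace = 1) : (fun j => (A j j).re) ∈ stdSimplex ℝ ι :=
  ⟨fun _ => (Complex.nonneg_iff.mp hA.diag_nonneg).1, by
    simpa [trace] using congrArg Complex.re htr⟩

theorem Matrix.trace_conjTranspose_mul_mul_of_mem_unitaryGroup [DecidableEq ι]
    {V : Matrix ι ι ℂ} (hV : V ∈ unitaryGroup ι ℂ) (A : Matrix ι ι ℂ) :
    (Vᴴ * A * V).trace = A.trace := by
  rw [trace_mul_cycle, ← star_eq_conjTranspose, Unitary.mul_star_self_of_mem hV, Matrix.one_mul]

theorem setOf_norm_trace_mul_conj_diagonal_eq_image [DecidableEq ι] {V : Matrix ι ι ℂ}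
    (hV : V ∈ unitaryGroup ι ℂ) (d : ι → ℂ) :
    {x : ℝ | ∃ ρ : Matrix ι ι ℂ, ρ.PosSemidef ∧ ρ.trace = 1 ∧
        x = ‖(ρ * (V * diagonal d * Vᴴ)).trace‖} =
      (fun p : ι → ℝ => ‖∑ j, (p j : ℂ) * d j‖) '' stdSimplex ℝ ι := by
  have hVV : Vᴴ * V = 1 := by rw [← star_eq_conjTranspose, Unitary.star_mul_self_of_mem hV]
  ext x
  constructor
  · rintro ⟨ρ, hρ, hρ1, rfl⟩
    have hA := hρ.conjTranspose_mul_mul_same V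
    refine ⟨_, hA.re_diag_mem_stdSimplex
      (by rw [trace_conjTranspose_mul_mul_of_mem_unitaryGroup hV, hρ1]), ?_⟩
    dsimp only
    rw [trace_mul_mul_diagonal_mul]
    congr 1
    exact Finset.sum_congr rfl fun j _ => by rw [← hA.isHermitian.coe_re_apply_self j]; rfl
  · rintro ⟨p, hp, rfl⟩
    let D : Matrix ι ι ℂ := diagonal fun j => (p j : ℂ)
    have hconj : Vᴴ * (V * D * Vᴴ) * V = D := by
      simp only [Matrix.mul_assoc, hVV, Matrix.mul_one, ← Matrix.mul_assoc Vᴴ, Matrix.one_mul]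
    refine ⟨V * D * Vᴴ, ?_, ?_, ?_⟩
    · have hD : D.PosSemidef := PosSemidef.diagonal fun j => Complex.zero_le_real.mpr (hp.1 j)
      exact hD.mul_mul_conjTranspose_same V
    · rw [trace_mul_cycle, hVV, Matrix.one_mul, trace_diagonal]
      exact_mod_cast hp.2
    · rw [trace_mul_mul_diagonal_mul, hconj]
      simp [D]

end

theorem unitary_channel_Fmin_general {n : ℕ} (hn : 0 < n)
    (U V : Matrix (Fin n) (Fin n) ℂ) (θ : Fin n → ℝ)
    (hV : V ∈ Matrix.unitaryGroup (Fin n) ℂ)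
    (hdiag : U = V * Matrix.diagonal (fun j => Complex.exp ((θ j : ℂ) * Complex.I)) * Vᴴ)
    (hθ : ∀ j, |θ j| ≤ Real.pi / 2) :
    IsLeast {x : ℝ | ∃ ρ : Matrix (Fin n) (Fin n) ℂ, ρ.PosSemidef ∧ ρ.trace = 1 ∧
        x = ‖(ρ * U).trace‖}
      (Real.cos (((⨆ j, θ j) - ⨅ j, θ j) / 2)) := by
  have : Nonempty (Fin n) := ⟨⟨0, hn⟩⟩
  obtain ⟨jM, hjM⟩ := exists_eq_ciSup_of_finite (f := θ)
  obtain ⟨jm, hjm⟩ := exists_eq_ciInf_of_finite (f := θ)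
  have hrange : ∀ j, θ j ∈ Set.Icc (θ jm) (θ jM) := fun j =>
    ⟨hjm ▸ ciInf_le (Set.finite_range θ).bddBelow j, hjM ▸ le_ciSup (Set.finite_range θ).bddAbove j⟩
  have hwidth : θ jM - θ jm ≤ Real.pi := by
    linarith [(abs_le.mp (hθ jM)).2, (abs_le.mp (hθ jm)).1]
  rw [hdiag, setOf_norm_trace_mul_conj_diagonal_eq_image hV, ← hjM, ← hjm]
  exact isLeast_norm_sum_mul_exp hrange hwidth

/-- for unitary `U` with eigenvalues `e^{iθ_j}`, `|θ_j| ≤ π/2`, the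
minimum entanglement fidelity of the unitary channel `ρ ↦ UρUᴴ`, i.e.
`min_ρ |Tr(ρU)|` over density matrices, equals `cos((θ_max − θ_min)/2)`. -/
theorem unitary_channel_Fmin {n : ℕ} (hn : 0 < n)
    (U V : Matrix (Fin n) (Fin n) ℂ) (θ : Fin n → ℝ)
    (hU : U ∈ Matrix.unitaryGroup (Fin n) ℂ)
    (hV : V ∈ Matrix.unitaryGroup (Fin n) ℂ)
    (hdiag : U = V * Matrix.diagonal (fun j => Complex.exp ((θ j : ℂ) * Complex.I)) * Vᴴ)
    (hθ : ∀ j, |θ j| ≤ Real.pi / 2) :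
    IsLeast {x : ℝ | ∃ ρ : Matrix (Fin n) (Fin n) ℂ, ρ.PosSemidef ∧ ρ.trace = 1 ∧
        x = ‖(ρ * U).trace‖}
      (Real.cos (((⨆ j, θ j) - ⨅ j, θ j) / 2)) :=
  unitary_channel_Fmin_general hn U V θ hV hdiag hθ
end

section
/- Let U = exp(−iHt/ℏ) for a Hermitian matrix H with eigenvalues E_j, and suppose |E_j t/ℏ| ≤ π/2 for all j. If some unit vector ψ satisfies |⟨ψ|U|ψ⟩| = F, then t ≥ 2ℏ arccos(F)/(E_max − E_min), where E_max, E_min are the largest and smallest eigenvalues of H. -/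
/-!
In the eigenbasis of `H`, `⟨ψ|U|ψ⟩ = ∑ⱼ pⱼ e^{-iθⱼ}` with weights `pⱼ = |⟨j|ψ⟩|²`
summing to one and phases `θⱼ = Eⱼ t/ℏ` confined to an arc of length
`(E_max − E_min) t/ℏ ≤ π`. After rotating by the midpoint of the arc, every phase
contributes a real part of at least the cosine of half the arc length, so
`F ≥ cos ((E_max − E_min) t/2ℏ)`; applying the decreasing `arccos` gives the bound.
-/

open Matrix Real

theorem Complex.cos_half_le_norm_sum_mul_exp {ι : Type*} [Fintype ι] {p : ι → ℝ}
    (hp : ∀ j, 0 ≤ p j) (hp1 : ∑ j, p j = 1) {θ : ι → ℝ} {a b : ℝ}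
    (hθ : ∀ j, θ j ∈ Set.Icc a b) (hab : b - a ≤ 2 * π) :
    Real.cos ((b - a) / 2) ≤ ‖∑ j, (p j : ℂ) * Complex.exp (θ j * Complex.I)‖ := by
  set φ := (a + b) / 2 with hφ
  have hre : (Complex.exp (-φ * Complex.I) * ∑ j, (p j : ℂ) * Complex.exp (θ j * Complex.I)).re
      = ∑ j, p j * Real.cos (θ j - φ) := by
    rw [Finset.mul_sum, Complex.re_sum]
    refine Finset.sum_congr rfl fun j _ => ?_
    rw [mul_left_comm, ← Complex.exp_add, ← add_mul, ← Complex.ofReal_neg, ← Complex.ofReal_add,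
      Complex.re_ofReal_mul, Complex.exp_ofReal_mul_I_re, neg_add_eq_sub]
  have hcos : ∀ j, Real.cos ((b - a) / 2) ≤ Real.cos (θ j - φ) := fun j => by
    rw [← Real.cos_abs (θ j - φ)]
    exact Real.cos_le_cos_of_nonneg_of_le_pi (abs_nonneg _) (by linarith)
      (abs_le.mpr ⟨by linarith [(hθ j).1], by linarith [(hθ j).2]⟩)
  calc Real.cos ((b - a) / 2) = ∑ j, p j * Real.cos ((b - a) / 2) := by
        rw [← Finset.sum_mul, hp1, one_mul]
    _ ≤ ∑ j, p j * Real.cos (θ j - φ) := by gcongr with j; exacts [hp j, hcos j]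
    _ = _ := hre.symm
    _ ≤ ‖Complex.exp (-φ * Complex.I) * ∑ j, (p j : ℂ) * Complex.exp (θ j * Complex.I)‖ :=
        Complex.re_le_norm _
    _ = _ := by rw [norm_mul, ← Complex.ofReal_neg, Complex.norm_exp_ofReal_mul_I, one_mul]

theorem Real.arccos_le_of_cos_le {x y : ℝ} (hx₀ : 0 ≤ x) (hxπ : x ≤ π) (h : cos x ≤ y) :
    arccos y ≤ x :=
  (arccos_le_arccos h).trans_eq (arccos_cos hx₀ hxπ)

theorem Real.ciSup_sub_ciInf_le_two_mul {ι : Type*} [Finite ι] [Nonempty ι] {f : ι → ℝ}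
    {r : ℝ} (h : ∀ i, |f i| ≤ r) : (⨆ i, f i) - ⨅ i, f i ≤ 2 * r := by
  obtain ⟨imax, himax⟩ := exists_eq_ciSup_of_finite (f := f)
  obtain ⟨imin, himin⟩ := exists_eq_ciInf_of_finite (f := f)
  rw [← himax, ← himin]
  linarith [(abs_le.mp (h imax)).2, (abs_le.mp (h imin)).1]

theorem Matrix.star_dotProduct_conj_diagonal_mulVec {n : Type*} [Fintype n] [DecidableEq n]
    (V : Matrix n n ℂ) (d : n → ℂ) (ψ : n → ℂ) :
    star ψ ⬝ᵥ (V * diagonal d * star V) *ᵥ ψ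
      = ∑ j, (Complex.normSq ((star V *ᵥ ψ) j) : ℂ) * d j := by
  have hstar : star (star V *ᵥ ψ) = star ψ ᵥ* V := by
    rw [star_mulVec, star_eq_conjTranspose, conjTranspose_conjTranspose]
  rw [← mulVec_mulVec, ← mulVec_mulVec, dotProduct_mulVec, ← hstar, dotProduct]
  refine Finset.sum_congr rfl fun j _ => ?_
  rw [mulVec_diagonal, Complex.normSq_eq_conj_mul_self, Pi.star_apply, Complex.star_def]
  ring

namespace Matrix.IsHermitian
variable {n : Type*} [Fintype n] [DecidableEq n] {H : Matrix n n ℂ} (hH : H.IsHermitian)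
include hH

theorem exp_smul_eq (z : ℂ) :
    NormedSpace.exp (z • H) = (hH.eigenvectorUnitary : Matrix n n ℂ)
      * diagonal (fun j => Complex.exp (z * hH.eigenvalues j))
      * star (hH.eigenvectorUnitary : Matrix n n ℂ) := by
  have hinv :
      (hH.eigenvectorUnitary : Matrix n n ℂ)⁻¹ = star (hH.eigenvectorUnitary : Matrix n n ℂ) :=
    inv_eq_right_inv (Unitary.mul_star_self_of_mem hH.eigenvectorUnitary.2)
  conv_lhs => rw [hH.spectral_theorem, Unitary.conjStarAlgAut_apply, ← smul_mul_assoc,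
    ← mul_smul_comm, ← diagonal_smul, ← hinv, exp_conj _ _ Unitary.isUnit_coe, exp_diagonal]
  rw [hinv]
  congr
  ext j
  simp [Complex.exp_eq_exp_ℂ]

theorem exists_star_dotProduct_exp_smul_mulVec_eq_sum {ψ : n → ℂ} (hψ : star ψ ⬝ᵥ ψ = 1)
    (z : ℂ) : ∃ p : n → ℝ, (∀ j, 0 ≤ p j) ∧ ∑ j, p j = 1 ∧
      star ψ ⬝ᵥ NormedSpace.exp (z • H) *ᵥ ψ
        = ∑ j, (p j : ℂ) * Complex.exp (z * hH.eigenvalues j) := by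
  set V : Matrix n n ℂ := ↑hH.eigenvectorUnitary
  refine ⟨fun j => Complex.normSq ((star V *ᵥ ψ) j), fun j => Complex.normSq_nonneg _, ?_,
    by rw [hH.exp_smul_eq, star_dotProduct_conj_diagonal_mulVec]⟩
  have h := star_dotProduct_conj_diagonal_mulVec V (fun _ => 1) ψ
  rw [diagonal_one, mul_one, Unitary.mul_star_self_of_mem hH.eigenvectorUnitary.2, one_mulVec,
    hψ] at h
  simp only [mul_one] at h
  exact_mod_cast h.symm

theorem cos_le_norm_star_dotProduct_exp_smul_mulVec {ψ : n → ℂ} (hψ : star ψ ⬝ᵥ ψ = 1)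
    {s : ℝ} (hs : 0 ≤ s)
    (hspread : ((⨆ j, hH.eigenvalues j) - ⨅ j, hH.eigenvalues j) * s ≤ 2 * π) :
    cos (((⨆ j, hH.eigenvalues j) - ⨅ j, hH.eigenvalues j) * s / 2)
      ≤ ‖star ψ ⬝ᵥ NormedSpace.exp (-(Complex.I * s) • H) *ᵥ ψ‖ := by
  have : Nonempty n := by
    by_contra h
    simp [not_nonempty_iff.mp h] at hψ
  obtain ⟨p, hp, hp1, hψU⟩ :=
    hH.exists_star_dotProduct_exp_smul_mulVec_eq_sum hψ (-(Complex.I * s))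
  have hθ : ∀ j, -(hH.eigenvalues j * s)
      ∈ Set.Icc (-((⨆ j, hH.eigenvalues j) * s)) (-((⨅ j, hH.eigenvalues j) * s)) := fun j =>
    ⟨neg_le_neg (by gcongr; exact le_ciSup (Set.finite_range _).bddAbove j),
      neg_le_neg (by gcongr; exact ciInf_le (Set.finite_range _).bddBelow j)⟩
  have := Complex.cos_half_le_norm_sum_mul_exp hp hp1 hθ (by linarith)
  rw [hψU]
  convert this using 5 <;> push_cast <;> ring

end Matrix.IsHermitian

theorem time_energy_uncertainty_general {n : ℕ}
    (H : Matrix (Fin n) (Fin n) ℂ) (hH : H.IsHermitian)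
    (t ℏ : ℝ) (ht : 0 < t) (hℏ : 0 < ℏ)
    (hE : ∀ j, |hH.eigenvalues j * t / ℏ| ≤ Real.pi / 2)
    (U : Matrix (Fin n) (Fin n) ℂ)
    (hU : U = NormedSpace.exp ((-(Complex.I * (t / ℏ : ℝ))) • H))
    (ψ : Fin n → ℂ) (hψ : star ψ ⬝ᵥ ψ = 1)
    (F : ℝ) (hF : ‖star ψ ⬝ᵥ U.mulVec ψ‖ = F) :
    t ≥ 2 * ℏ * Real.arccos F / ((⨆ j, hH.eigenvalues j) - ⨅ j, hH.eigenvalues j) := by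
  set Emax := ⨆ j, hH.eigenvalues j
  set Emin := ⨅ j, hH.eigenvalues j
  set s := t / ℏ
  have hs : 0 ≤ s := by positivity
  rcases le_or_gt (Emax - Emin) 0 with hD | hD
  · exact (div_nonpos_of_nonneg_of_nonpos (mul_nonneg (by positivity) (arccos_nonneg F)) hD).trans
      ht.le
  have : Nonempty (Fin n) := by
    by_contra h
    simp [Emax, Emin, not_nonempty_iff.mp h] at hD
  have hπ : (Emax - Emin) * s ≤ π := by
    rw [sub_mul, Real.iSup_mul_of_nonneg hs, Real.iInf_mul_of_nonneg hs]
    linarith [ciSup_sub_ciInf_le_two_mul fun j => by simpa only [mul_div_assoc] using hE j]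
  have hcos := hH.cos_le_norm_star_dotProduct_exp_smul_mulVec hψ hs (by linarith [pi_pos])
  rw [← hU, hF] at hcos
  rw [ge_iff_le, div_le_iff₀ hD]
  calc 2 * ℏ * arccos F ≤ 2 * ℏ * ((Emax - Emin) * s / 2) := by
        gcongr
        exact arccos_le_of_cos_le (by positivity) (by linarith [pi_pos]) hcos
    _ = t * (Emax - Emin) := by simp only [s]; field_simp

/-- TEUR for the fastest state: let `U = exp(−iHt/ℏ)` with `H`
Hermitian, eigen-energies `E_j` satisfying `|E_j t/ℏ| ≤ π/2`.  If a unit vector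
`ψ` has `|⟨ψ|U|ψ⟩| = F` then `t ≥ 2ℏ arccos(F)/(E_max − E_min)`. -/
theorem time_energy_uncertainty {n : ℕ} (hn : 0 < n)
    (H : Matrix (Fin n) (Fin n) ℂ) (hH : H.IsHermitian)
    (t ℏ : ℝ) (ht : 0 < t) (hℏ : 0 < ℏ)
    (hE : ∀ j, |hH.eigenvalues j * t / ℏ| ≤ Real.pi / 2)
    (U : Matrix (Fin n) (Fin n) ℂ)
    (hU : U = NormedSpace.exp ((-(Complex.I * (t / ℏ : ℝ))) • H))
    (ψ : Fin n → ℂ) (hψ : star ψ ⬝ᵥ ψ = 1)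
    (F : ℝ) (hF : ‖star ψ ⬝ᵥ U.mulVec ψ‖ = F) :
    t ≥ 2 * ℏ * Real.arccos F / ((⨆ j, hH.eigenvalues j) - ⨅ j, hH.eigenvalues j) :=
  time_energy_uncertainty_general H hH t ℏ ht hℏ hE U hU ψ hψ F hF
end
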